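/- For the rank-one dressing factor D_j(ζ) constructed from B_j = |z_j⟩⟨y_j| as in the dressing method, one has σ₂ D_j(ζ)^T σ₂ = ((ζ² − ζ̄_j²)/(ζ² − ζ_j²)) D_j⁻¹(ζ) for all ζ ∉ {±ζ_j, ±ζ̄_j}. -/

import Mathlib

/- For a 2 × 2 matrix `σ₂ Mᵀ σ₂` is the adjugate of `M`, i.e. `det M • M⁻¹`. So it suffices that the
displayed `Dⱼ⁻¹` really is the inverse of `Dⱼ` and that `det Dⱼ(ζ) = (ζ² − ζ̄ⱼ²)/(ζ² − ζⱼ²)`. Both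
are rational identities in `ζ` once `α` and `ᾱ` are replaced by the reciprocals of
`⟨y|diag(ζⱼ, ζ̄ⱼ)|y⟩` and of its conjugate. -/

open Matrix Filter Topology ComplexConjugate

noncomputable section

attribute [local instance] Matrix.normedAddCommGroup Matrix.normedSpace

abbrev M2 := Matrix (Fin 2) (Fin 2) ℂ

def σ3 : M2 := !![1, 0; 0, -1]

def σ2 : M2 := !![0, -Complex.I; Complex.I, 0]

/-- A 2×2 matrix is diagonal if its off-diagonal entries vanish. -/
def IsDiag2 (A : M2) : Prop := A 0 1 = 0 ∧ A 1 0 = 0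

/-- A 2×2 matrix is off-diagonal if its diagonal entries vanish. -/
def IsOffDiag2 (A : M2) : Prop := A 0 0 = 0 ∧ A 1 1 = 0

theorem sigma2_mul_transpose_mul_sigma2 (M : M2) : σ2 * Mᵀ * σ2 = adjugate M := by
  ext i j
  fin_cases i <;> fin_cases j <;>
    simp [σ2, mul_apply, vecMul, dotProduct, Fin.sum_univ_two, adjugate_fin_two] <;>
    ring_nf <;> simp [Complex.I_sq]

theorem Matrix.adjugate_eq_det_smul_of_mul_eq_one {n R : Type*} [Fintype n] [DecidableEq n]
    [CommRing R] {M N : Matrix n n R} (h : M * N = 1) : adjugate M = M.det • N := by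
  rw [← Matrix.mul_one (adjugate M), ← h, ← Matrix.mul_assoc, adjugate_mul, smul_one_mul]

/-- `Dⱼ(ζ)` is `dressingFactor ζⱼ Bⱼ ζ`, and the claimed `Dⱼ⁻¹(ζ)` is `dressingFactor ζ̄ⱼ Bⱼᴴ ζ`. -/
def dressingFactor (ζ : ℂ) (B : M2) (w : ℂ) : M2 :=
  1 + (w - ζ)⁻¹ • B - (w + ζ)⁻¹ • (σ3 * B * σ3)

theorem dressingFactor_vecMulVec (ζ w : ℂ) (z y : Fin 2 → ℂ) :
    dressingFactor ζ (vecMulVec z y) w =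
      !![1 + z 0 * y 0 * ((w - ζ)⁻¹ - (w + ζ)⁻¹), z 0 * y 1 * ((w - ζ)⁻¹ + (w + ζ)⁻¹);
         z 1 * y 0 * ((w - ζ)⁻¹ + (w + ζ)⁻¹), 1 + z 1 * y 1 * ((w - ζ)⁻¹ - (w + ζ)⁻¹)] := by
  ext i j
  fin_cases i <;> fin_cases j <;>
    simp [dressingFactor, σ3, mul_apply, vecMul, dotProduct, Fin.sum_univ_two, vecMulVec_apply] <;>
    ring

section RankOne

variable {ζ α : ℂ} {y z : Fin 2 → ℂ}
  (hα : α * (ζ * y 0 * conj (y 0) + conj ζ * y 1 * conj (y 1)) = 1)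

include hα in
theorem conj_mul_eq_one_of_mul_eq_one :
    conj α * (conj ζ * y 0 * conj (y 0) + ζ * y 1 * conj (y 1)) = 1 := by
  simpa [mul_comm, mul_left_comm] using congrArg conj hα

variable (hz0 : z 0 = (ζ ^ 2 - conj ζ ^ 2) / 2 * α * conj (y 0))
  (hz1 : z 1 = (ζ ^ 2 - conj ζ ^ 2) / 2 * conj α * conj (y 1))
include hα hz0 hz1

theorem det_dressingFactor_vecMulVec {w : ℂ} (hw₁ : w ≠ ζ) (hw₂ : w ≠ -ζ) :
    (dressingFactor ζ (vecMulVec z y) w).det = (w ^ 2 - conj ζ ^ 2) / (w ^ 2 - ζ ^ 2) := by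
  have h₁ : w - ζ ≠ 0 := sub_ne_zero.mpr hw₁
  have h₂ : w + ζ ≠ 0 := mt eq_neg_iff_add_eq_zero.mpr hw₂
  have h₁₂ : w ^ 2 - ζ ^ 2 ≠ 0 := by
    rw [sq_sub_sq]
    exact mul_ne_zero h₂ h₁
  have hα' := conj_mul_eq_one_of_mul_eq_one hα
  have hN := right_ne_zero_of_mul_eq_one hα
  have hN' := right_ne_zero_of_mul_eq_one hα'
  rw [eq_inv_of_mul_eq_one_left hα] at hz0
  rw [eq_inv_of_mul_eq_one_left hα'] at hz1
  rw [dressingFactor_vecMulVec, det_fin_two_of, hz0, hz1]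
  field_simp
  ring

theorem dressingFactor_mul_dressingFactor_conjTranspose {w : ℂ} (hw₁ : w ≠ ζ) (hw₂ : w ≠ -ζ)
    (hw₃ : w ≠ conj ζ) (hw₄ : w ≠ -conj ζ) :
    dressingFactor ζ (vecMulVec z y) w * dressingFactor (conj ζ) (vecMulVec z y)ᴴ w = 1 := by
  have h₁ : w - ζ ≠ 0 := sub_ne_zero.mpr hw₁
  have h₂ : w + ζ ≠ 0 := mt eq_neg_iff_add_eq_zero.mpr hw₂
  have h₃ : w - conj ζ ≠ 0 := sub_ne_zero.mpr hw₃
  have h₄ : w + conj ζ ≠ 0 := mt eq_neg_iff_add_eq_zero.mpr hw₄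
  have hα' := conj_mul_eq_one_of_mul_eq_one hα
  have hN := right_ne_zero_of_mul_eq_one hα
  have hN' := right_ne_zero_of_mul_eq_one hα'
  rw [eq_inv_of_mul_eq_one_left hα] at hz0
  rw [eq_inv_of_mul_eq_one_left hα'] at hz1
  rw [conjTranspose_vecMulVec, dressingFactor_vecMulVec, dressingFactor_vecMulVec, mul_fin_two,
    one_fin_two]
  ext i j
  fin_cases i <;> fin_cases j <;> simp [hz0, hz1] <;> field_simp <;> ring

end RankOne

theorem stmt9_general
    (zj : ℂ)
    (y : Fin 2 → ℂ)
    (α : ℂ) (hα : α * (zj * y 0 * conj (y 0) + conj zj * y 1 * conj (y 1)) = 1)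
    (z : Fin 2 → ℂ)
    (hz0 : z 0 = (zj ^ 2 - (conj zj) ^ 2) / 2 * α * conj (y 0))
    (hz1 : z 1 = (zj ^ 2 - (conj zj) ^ 2) / 2 * conj α * conj (y 1))
    (B : M2) (hB : B = Matrix.vecMulVec z y)
    (E : ℂ → M2)
    (hE : ∀ w : ℂ, E w = 1 + (w - conj zj)⁻¹ • Bᴴ - (w + conj zj)⁻¹ • (σ3 * Bᴴ * σ3))
    (D : ℂ → M2)
    (hD : ∀ w : ℂ, D w = 1 + (w - zj)⁻¹ • B - (w + zj)⁻¹ • (σ3 * B * σ3)) :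
    ∀ w : ℂ, w ≠ zj → w ≠ -zj → w ≠ conj zj → w ≠ -conj zj →
      σ2 * (D w)ᵀ * σ2 = ((w ^ 2 - (conj zj) ^ 2) / (w ^ 2 - zj ^ 2)) • E w := by
  intro w hw₁ hw₂ hw₃ hw₄
  have hDE : D w * E w = 1 := by
    rw [hD, hE, hB]
    exact dressingFactor_mul_dressingFactor_conjTranspose hα hz0 hz1 hw₁ hw₂ hw₃ hw₄
  have hdet : (D w).det = (w ^ 2 - conj zj ^ 2) / (w ^ 2 - zj ^ 2) := by
    rw [hD, hB]
    exact det_dressingFactor_vecMulVec hα hz0 hz1 hw₁ hw₂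
  rw [sigma2_mul_transpose_mul_sigma2, adjugate_eq_det_smul_of_mul_eq_one hDE, hdet]

/-- `σ₂ Dⱼ(ζ)ᵀ σ₂ = ((ζ² − ζ̄ⱼ²)/(ζ² − ζⱼ²)) Dⱼ⁻¹(ζ)` away from the poles. -/
theorem stmt9
    (zj : ℂ) (hzj : zj ^ 2 ≠ (conj zj) ^ 2)
    (y : Fin 2 → ℂ) (hy : y ≠ 0)
    (α : ℂ) (hα : α * (zj * y 0 * conj (y 0) + conj zj * y 1 * conj (y 1)) = 1)
    (z : Fin 2 → ℂ)
    (hz0 : z 0 = (zj ^ 2 - (conj zj) ^ 2) / 2 * α * conj (y 0))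
    (hz1 : z 1 = (zj ^ 2 - (conj zj) ^ 2) / 2 * conj α * conj (y 1))
    (B : M2) (hB : B = Matrix.vecMulVec z y)
    (E : ℂ → M2)
    (hE : ∀ w : ℂ, E w = 1 + (w - conj zj)⁻¹ • Bᴴ - (w + conj zj)⁻¹ • (σ3 * Bᴴ * σ3))
    (D : ℂ → M2)
    (hD : ∀ w : ℂ, D w = 1 + (w - zj)⁻¹ • B - (w + zj)⁻¹ • (σ3 * B * σ3)) :
    ∀ w : ℂ, w ≠ zj → w ≠ -zj → w ≠ conj zj → w ≠ -conj zj →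
      σ2 * (D w)ᵀ * σ2 = ((w ^ 2 - (conj zj) ^ 2) / (w ^ 2 - zj ^ 2)) • E w :=
  stmt9_general zj y α hα z hz0 hz1 B hB E hE D hD
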